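/- arXiv:1908.09618 — 5 statements merged into one kernel-verified Lean document; each statement's English description precedes it below -/
import Mathlib

section
/- For all integers i, j ≥ 1, setting ψ = ⌈i/2⌉ - 1 and φ = ⌈(j + ψ)/2⌉ - 1, there exist i', j' ∈ {1, 2} such that (i, j) = (i', j') + φ·(0, 2) + ψ·(2, -1); moreover φ ≥ 0 and ψ ≥ 0. -/
/-!
With `q n := ⌈n / 2⌉ - 1`, the remainder `n - 2 * q n` always lies in `{1, 2}`, and `q n ≥ 0` as
soon as `n ≥ 1`. Take `i' := i - 2ψ` with `ψ := q i`; the extender `X₂²` then shifts the second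
coordinate to `j + ψ`, and `j' := (j + ψ) - 2φ` with `φ := q (j + ψ)`.
-/

lemma Int.ceil_intCast_div_two (n : ℤ) : ⌈(n : ℚ) / 2⌉ = -(-n / 2) := by
  exact_mod_cast Rat.ceil_intCast_div_natCast n 2

lemma Int.sub_two_mul_ceil_half_sub_one_mem (n : ℤ) :
    n - 2 * (⌈(n : ℚ) / 2⌉ - 1) ∈ ({1, 2} : Set ℤ) := by
  rw [Int.ceil_intCast_div_two, Set.mem_insert_iff, Set.mem_singleton_iff]
  omega

lemma Int.ceil_half_sub_one_nonneg {n : ℤ} (hn : 1 ≤ n) : 0 ≤ ⌈(n : ℚ) / 2⌉ - 1 := by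
  rw [Int.ceil_intCast_div_two]
  omega

theorem stmt_6 (i j : ℤ) (hi : 1 ≤ i) (hj : 1 ≤ j) :
    let ψ : ℤ := ⌈(i : ℚ)/2⌉ - 1
    let φ : ℤ := ⌈((j + ψ : ℤ) : ℚ)/2⌉ - 1
    ∃ i' j' : ℤ, i' ∈ ({1, 2} : Set ℤ) ∧ j' ∈ ({1, 2} : Set ℤ) ∧
      i = i' + φ * 0 + ψ * 2 ∧ j = j' + φ * 2 + ψ * (-1) ∧
      0 ≤ φ ∧ 0 ≤ ψ := by
  intro ψ φ
  have hψ : 0 ≤ ψ := Int.ceil_half_sub_one_nonneg hi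
  have hφ : 0 ≤ φ := Int.ceil_half_sub_one_nonneg (by omega)
  exact ⟨i - 2 * ψ, j + ψ - 2 * φ, Int.sub_two_mul_ceil_half_sub_one_mem i,
    Int.sub_two_mul_ceil_half_sub_one_mem (j + ψ), by ring, by ring, hφ, hψ⟩
end

section
/- Let J = {(i,j) : i,j ∈ {1,2,3}} ∪ {(4,2),(2,5)}. For all integers i, j ≥ 1 with (i,j) ∉ J ∪ {(6,1)}, there exist integers φ, ψ ≥ 0 and (i',j') ∈ J \ {(1,1),(1,3),(3,2)} such that (i,j) = (i',j') + φ·(-1,3) + ψ·(3,-1). -/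
/-!
The linear forms `a = 3 i + j` and `b = i + 3 j` turn the extenders `(-1, 3)` and `(3, -1)` into
`(0, 8)` and `(8, 0)`, and `b ≡ 3 a [ZMOD 8]` always holds. So `q` is reached from `p` exactly when
`a q ≡ a p [ZMOD 8]`, `a p ≤ a q` and `b p ≤ b q`. Every residue of `a` modulo 8 has a base point in
`J \ {(1,1), (1,3), (3,2)}` whose values of `a` and `b` are minimal among the points `i, j ≥ 1` of that
residue, except that `(1,1)`, `(1,3)`, `(3,2)` and `(6,1)` undercut their base point.
-/

theorem exists_extension_of_modEq {p q : ℤ × ℤ}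
    (hmod : 3 * p.1 + p.2 ≡ 3 * q.1 + q.2 [ZMOD 8])
    (ha : 3 * p.1 + p.2 ≤ 3 * q.1 + q.2) (hb : p.1 + 3 * p.2 ≤ q.1 + 3 * q.2) :
    ∃ φ ψ : ℤ, 0 ≤ φ ∧ 0 ≤ ψ ∧
      q.1 = p.1 + φ * (-1) + ψ * 3 ∧ q.2 = p.2 + φ * 3 + ψ * (-1) := by
  rw [Int.ModEq] at hmod
  exact ⟨(q.1 + 3 * q.2 - (p.1 + 3 * p.2)) / 8, (3 * q.1 + q.2 - (3 * p.1 + p.2)) / 8,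
    by omega, by omega, by omega, by omega⟩

theorem exists_basePoint (i j : ℤ) (hi : 1 ≤ i) (hj : 1 ≤ j)
    (h11 : (i, j) ≠ (1, 1)) (h13 : (i, j) ≠ (1, 3)) (h32 : (i, j) ≠ (3, 2))
    (h61 : (i, j) ≠ (6, 1)) :
    ∃ p ∈ ({(1,1),(1,2),(1,3),(2,1),(2,2),(2,3),(3,1),(3,2),(3,3),(4,2),(2,5)} : Set (ℤ × ℤ)) \
        {((1 : ℤ), (1 : ℤ)), ((1 : ℤ), (3 : ℤ)), ((3 : ℤ), (2 : ℤ))},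
      3 * p.1 + p.2 ≡ 3 * i + j [ZMOD 8] ∧
        3 * p.1 + p.2 ≤ 3 * i + j ∧ p.1 + 3 * p.2 ≤ i + 3 * j := by
  simp only [ne_eq, Prod.mk.injEq, not_and_or] at h11 h13 h32 h61
  simp only [Int.ModEq]
  have hres : (3 * i + j) % 8 < 8 := Int.emod_lt_of_pos _ (by norm_num)
  have hres₀ : 0 ≤ (3 * i + j) % 8 := Int.emod_nonneg _ (by norm_num)
  interval_cases hr : (3 * i + j) % 8
  · exact ⟨(2, 2), by simp, by omega, by omega, by omega⟩
  · exact ⟨(2, 3), by simp, by omega, by omega, by omega⟩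
  · exact ⟨(3, 1), by simp, by omega, by omega, by omega⟩
  · exact ⟨(2, 5), by simp, by omega, by omega, by omega⟩
  · exact ⟨(3, 3), by simp, by omega, by omega, by omega⟩
  · exact ⟨(1, 2), by simp, by omega, by omega, by omega⟩
  · exact ⟨(4, 2), by simp, by omega, by omega, by omega⟩
  · exact ⟨(2, 1), by simp, by omega, by omega, by omega⟩

theorem stmt_8 (i j : ℤ) (hi : 1 ≤ i) (hj : 1 ≤ j)
    (J : Set (ℤ × ℤ))
    (hJ : J = {(1,1),(1,2),(1,3),(2,1),(2,2),(2,3),(3,1),(3,2),(3,3),(4,2),(2,5)})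
    (hnot : (i, j) ∉ J ∪ {((6 : ℤ), (1 : ℤ))}) :
    ∃ φ ψ : ℤ, 0 ≤ φ ∧ 0 ≤ ψ ∧
      ∃ p ∈ J \ {((1 : ℤ), (1 : ℤ)), ((1 : ℤ), (3 : ℤ)), ((3 : ℤ), (2 : ℤ))},
        i = p.1 + φ * (-1) + ψ * 3 ∧ j = p.2 + φ * 3 + ψ * (-1) := by
  subst hJ
  simp only [Set.union_singleton, Set.mem_insert_iff, Set.mem_singleton_iff, not_or] at hnot
  obtain ⟨h61, h11, -, h13, -, -, -, -, h32, -⟩ := hnot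
  obtain ⟨p, hpJ, hmod, ha, hb⟩ := exists_basePoint i j hi hj h11 h13 h32 h61
  obtain ⟨φ, ψ, hφ, hψ, h₁, h₂⟩ := exists_extension_of_modEq (q := (i, j)) hmod ha hb
  exact ⟨φ, ψ, hφ, hψ, p, hpJ, h₁, h₂⟩
end

section
/- Consider the mixing rewriting relation on finite multisets of rationals (replacing two elements a, b by two copies of (a+b)/2). Let M₀ be the multiset consisting of i copies of 0 and j copies of 1. If a multiset M reachable from M₀ contains an element c with 0 < c < 2^{-γ} for some integer γ ≥ 0, then i ≥ γ + 1. -/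
def MixStep (M N : Multiset ℚ) : Prop :=
  ∃ a b : ℚ, ∃ R : Multiset ℚ,
    M = a ::ₘ b ::ₘ R ∧ N = (a + b)/2 ::ₘ (a + b)/2 ::ₘ R

/-!
Track the number `z` of zeros. Every nonzero element stays at least `2 ^ z * 2⁻ⁱ`: mixing two
nonzero elements keeps `z` and averages two numbers above the bound, while mixing a zero with a
nonzero element halves that element but also lowers `z` by one. Since `z ≥ 0`, every positive
element of a reachable multiset is at least `2⁻ⁱ`.
-/

def ZeroBounded (K : ℚ) (M : Multiset ℚ) : Prop :=
  ∀ x ∈ M, x ≠ 0 → 2 ^ M.count 0 * K ≤ x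

namespace ZeroBounded

variable {K : ℚ}

theorem two_pow_succ_mul_le_add {a b : ℚ} {R : Multiset ℚ}
    (hM : ZeroBounded K (a ::ₘ b ::ₘ R)) (hab : ¬(a = 0 ∧ b = 0)) :
    2 ^ (R.count 0 + 1) * K ≤ a + b := by
  by_cases ha : a = 0
  · subst ha
    have hb : b ≠ 0 := fun hb => hab ⟨rfl, hb⟩
    have := hM b (by simp) hb
    simp only [Multiset.count_cons_self, Multiset.count_cons_of_ne (Ne.symm hb)] at this
    linarith
  by_cases hb : b = 0
  · subst hb
    have := hM a (by simp) ha
    simp only [Multiset.count_cons_self, Multiset.count_cons_of_ne (Ne.symm ha)] at this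
    linarith
  have hcount : (a ::ₘ b ::ₘ R).count 0 = R.count 0 := by
    simp only [Multiset.count_cons_of_ne (Ne.symm ha), Multiset.count_cons_of_ne (Ne.symm hb)]
  have ha' := hM a (by simp) ha
  have hb' := hM b (by simp) hb
  rw [hcount] at ha' hb'
  rw [pow_succ]
  linarith

theorem mixStep (hK : 0 < K) {M N : Multiset ℚ} (hM : ZeroBounded K M) (hMN : MixStep M N) :
    ZeroBounded K N := by
  obtain ⟨a, b, R, rfl, rfl⟩ := hMN
  by_cases hab : a = 0 ∧ b = 0
  · obtain ⟨rfl, rfl⟩ := hab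
    simpa using hM
  have hsum := hM.two_pow_succ_mul_le_add hab
  have hm : 2 ^ R.count 0 * K ≤ (a + b) / 2 := by rw [pow_succ] at hsum; linarith
  have hm0 : (a + b) / 2 ≠ 0 := (lt_of_lt_of_le (by positivity) hm).ne'
  intro x hx hx0
  rw [Multiset.count_cons_of_ne hm0.symm, Multiset.count_cons_of_ne hm0.symm]
  rcases Multiset.mem_cons.1 hx with rfl | hx
  · exact hm
  rcases Multiset.mem_cons.1 hx with rfl | hx
  · exact hm
  calc 2 ^ R.count 0 * K ≤ 2 ^ (a ::ₘ b ::ₘ R).count 0 * K := by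
        gcongr
        · norm_num
        · exact (Multiset.le_cons_self _ _).trans (Multiset.le_cons_self _ _)
    _ ≤ x := hM x (by simp [hx]) hx0

theorem reflTransGen (hK : 0 < K) {M N : Multiset ℚ} (hM : ZeroBounded K M)
    (hMN : Relation.ReflTransGen MixStep M N) : ZeroBounded K N := by
  induction hMN with
  | refl => exact hM
  | tail _ hstep ih => exact ih.mixStep hK hstep

end ZeroBounded

theorem zeroBounded_replicate_zero_add_replicate_one (i j : ℕ) :
    ZeroBounded (1 / 2 ^ i) (Multiset.replicate i 0 + Multiset.replicate j 1) := by
  intro x hx hx0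
  have hx1 : x = 1 := by
    rcases Multiset.mem_add.1 hx with hx | hx
    · exact absurd (Multiset.eq_of_mem_replicate hx) hx0
    · exact Multiset.eq_of_mem_replicate hx
  simp [hx1, Multiset.count_replicate]

theorem stmt_12 (i j : ℕ) (M : Multiset ℚ)
    (h : Relation.ReflTransGen MixStep
      (Multiset.replicate i 0 + Multiset.replicate j 1) M)
    (c : ℚ) (hc : c ∈ M) (γ : ℕ) (hc0 : 0 < c) (hcγ : c < 1/2^γ) :
    γ + 1 ≤ i := by
  have hM := (zeroBounded_replicate_zero_add_replicate_one i j).reflTransGen (by positivity) h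
  have hic : 1 / 2 ^ i ≤ c :=
    calc (1 : ℚ) / 2 ^ i ≤ 2 ^ M.count 0 * (1 / 2 ^ i) :=
          le_mul_of_one_le_left (by positivity) (one_le_pow₀ (by norm_num))
      _ ≤ c := hM c hc hc0.ne'
  have hpow : (2 : ℚ) ^ γ < 2 ^ i := by
    have hlt := hic.trans_lt hcγ
    rwa [one_div_lt_one_div (by positivity) (by positivity)] at hlt
  exact (pow_lt_pow_iff_right₀ (by norm_num)).1 hpow
end

section
/- Consider the mixing rewriting relation on finite multisets of rationals (replacing two elements a, b by two copies of (a+b)/2). Let M₀ consist of i copies of 0 and j copies of 1. If a multiset reachable from M₀ contains an element c with 1 - 2^{-γ} < c < 1 for some integer γ ≥ 0, then j ≥ γ + 1. -/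
/-!
Each copy of `1` is a unit of "headroom": mixing a `1` with some `b ≠ 1` consumes one copy and
halves the distance `1 - b`, while mixing two elements below `1` only averages distances.
Hence every element `x ≠ 1` reachable from `i` zeros and `j` ones satisfies
`2 ^ (number of ones) ≤ 2 ^ j * (1 - x)`, so `1 - c ≥ 2 ^ (-j)`, which forces `γ < j`.
-/

def GapBound (t D : ℚ) (M : Multiset ℚ) : Prop :=
  ∀ x ∈ M, x ≠ t → 2 ^ M.count t ≤ D * (t - x)

namespace GapBound

variable {t D a b m : ℚ} {R M N : Multiset ℚ}

lemma of_cons (h : GapBound t D (a ::ₘ R)) : GapBound t D R := fun x hx hxt =>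
  (pow_le_pow_right₀ one_le_two (Multiset.count_le_count_cons t a R)).trans
    (h x (Multiset.mem_cons_of_mem hx) hxt)

lemma head_of_ne (h : GapBound t D (a ::ₘ R)) (ha : a ≠ t) : 2 ^ R.count t ≤ D * (t - a) := by
  simpa [Multiset.count_cons_of_ne ha.symm] using h a (Multiset.mem_cons_self a R) ha

lemma cons_cons (hR : GapBound t D R) (hm : 2 ^ R.count t ≤ D * (t - m)) :
    GapBound t D (m ::ₘ m ::ₘ R) := by
  have hmt : m ≠ t := by
    rintro rfl
    simp only [sub_self, mul_zero] at hm
    exact (pow_pos two_pos _).not_ge hm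
  intro x hx hxt
  rw [Multiset.count_cons_of_ne hmt.symm, Multiset.count_cons_of_ne hmt.symm]
  simp only [Multiset.mem_cons] at hx
  rcases hx with rfl | rfl | hx
  · exact hm
  · exact hm
  · exact hR x hx hxt

lemma mix_of_ne_of_ne (h : GapBound t D (a ::ₘ b ::ₘ R)) (ha : a ≠ t) (hb : b ≠ t) :
    GapBound t D ((a + b) / 2 ::ₘ (a + b) / 2 ::ₘ R) := by
  have hbR := h.of_cons
  have hga := h.head_of_ne ha
  rw [Multiset.count_cons_of_ne hb.symm] at hga
  have hgb := hbR.head_of_ne hb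
  exact hbR.of_cons.cons_cons (by linarith)

lemma mix_of_eq_of_ne (h : GapBound t D (t ::ₘ b ::ₘ R)) (hb : b ≠ t) :
    GapBound t D ((t + b) / 2 ::ₘ (t + b) / 2 ::ₘ R) := by
  have hgb := h b (by simp) hb
  rw [Multiset.count_cons_self, Multiset.count_cons_of_ne hb.symm, pow_succ] at hgb
  exact h.of_cons.of_cons.cons_cons (by linarith)

lemma mix (h : GapBound t D (a ::ₘ b ::ₘ R)) :
    GapBound t D ((a + b) / 2 ::ₘ (a + b) / 2 ::ₘ R) := by
  by_cases ha : a = t <;> by_cases hb : b = t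
  · subst ha hb
    rwa [add_self_div_two]
  · subst ha
    exact h.mix_of_eq_of_ne hb
  · subst hb
    rw [Multiset.cons_swap] at h
    rw [add_comm]
    exact h.mix_of_eq_of_ne ha
  · exact h.mix_of_ne_of_ne ha hb

lemma mixStep (h : GapBound t D M) (hMN : MixStep M N) : GapBound t D N := by
  obtain ⟨a, b, R, rfl, rfl⟩ := hMN
  exact h.mix

lemma reflTransGen (h : GapBound t D M) (hMN : Relation.ReflTransGen MixStep M N) :
    GapBound t D N := by
  induction hMN with
  | refl => exact h
  | tail _ hstep ih => exact ih.mixStep hstep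

lemma replicate_zero_add_replicate_one (i j : ℕ) :
    GapBound 1 (2 ^ j) (Multiset.replicate i 0 + Multiset.replicate j 1) := by
  intro x hx hx1
  rcases Multiset.mem_add.1 hx with hx | hx
  · simp [Multiset.eq_of_mem_replicate hx, Multiset.count_replicate]
  · exact absurd (Multiset.eq_of_mem_replicate hx) hx1

end GapBound

theorem stmt_13 (i j : ℕ) (M : Multiset ℚ)
    (h : Relation.ReflTransGen MixStep
      (Multiset.replicate i 0 + Multiset.replicate j 1) M)
    (c : ℚ) (hc : c ∈ M) (γ : ℕ) (hc1 : 1 - 1/2^γ < c) (hc2 : c < 1) :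
    γ + 1 ≤ j := by
  have hgap := (GapBound.replicate_zero_add_replicate_one i j).reflTransGen h c hc hc2.ne
  have hone : (1 : ℚ) ≤ 2 ^ M.count 1 := one_le_pow₀ one_le_two
  have hc1' : (1 - c) * 2 ^ γ < 1 :=
    (lt_div_iff₀ (pow_pos two_pos γ)).1 (by linarith)
  have hpow : (2 : ℚ) ^ γ < 2 ^ j := by
    by_contra! hle
    nlinarith [mul_le_mul_of_nonneg_left hle (sub_nonneg.2 hc2.le)]
  exact (pow_lt_pow_iff_right₀ one_lt_two).1 hpow
end

section
/- Let t_0 be a rational with 1/4 ≤ t_0 ≤ 3/4 and binary precision d_0, and suppose the recursion t_{s+1} = 4(t_s - l_s), with l_s chosen so that t_s lies in the middle section [l_s + 1/16, l_s + 3/16] of some interval [l_s, l_s + 1/4] with l_s ∈ {1/8, 2/8, 3/8, 4/8, 5/8}, is iterated until the current value has precision at most 3. If d_0 ≥ 4, then the recursion terminates after exactly ⌈(d_0 - 3)/2⌉ steps, and the terminal value has precision 2 or 3 and lies in {1/4, 3/8, 1/2, 5/8, 3/4}. -/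
/-!
Writing `t₀ = a / 2 ^ d₀` with `a` odd, one step `t ↦ 4 (t - l)` with `8 l ∈ ℤ` maps an odd numerator
over `2 ^ (d + 4)` to an odd numerator over `2 ^ (d + 2)`, so the precision drops by exactly two while it is
at least four. The choice `N = ⌈(d₀ - 3) / 2⌉` means `d₀ - 2 N ∈ {2, 3}`, so `8 t_s` is an integer for
`s = N` and for no earlier `s`. Each step lands in `[1/4, 3/4]`, and the only multiples of `1/8` there
are the five listed values.
-/

def HasBinaryPrecision (x : ℚ) (d : ℕ) : Prop :=
  ∃ a : ℤ, Odd a ∧ x = a / 2 ^ d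

namespace HasBinaryPrecision

theorem exists_int_two_pow_mul_iff {x : ℚ} {d : ℕ} (hx : HasBinaryPrecision x d) (m : ℕ) :
    (∃ n : ℤ, (2 : ℚ) ^ m * x = n) ↔ d ≤ m := by
  obtain ⟨a, ha, rfl⟩ := hx
  constructor
  · rintro ⟨n, hn⟩
    by_contra! hmd
    obtain ⟨e, rfl⟩ := Nat.exists_eq_add_of_lt hmd
    have ha' : a = n * 2 ^ (e + 1) := by
      have : (a : ℚ) = n * 2 ^ (e + 1) := by
        field_simp at hn
        refine mul_left_cancel₀ (pow_ne_zero m two_ne_zero) ?_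
        rw [hn]
        ring
      exact_mod_cast this
    exact Int.not_even_iff_odd.mpr ha ⟨n * 2 ^ e, by rw [ha']; ring⟩
  · intro hdm
    obtain ⟨e, rfl⟩ := Nat.exists_eq_add_of_le hdm
    exact ⟨a * 2 ^ e, by push_cast; field_simp; ring⟩

theorem four_mul_sub {x : ℚ} {d : ℕ} (hx : HasBinaryPrecision x (d + 4)) {l : ℚ}
    (hl : ∃ k : ℤ, 8 * l = k) : HasBinaryPrecision (4 * (x - l)) (d + 2) := by
  obtain ⟨a, ha, rfl⟩ := hx
  obtain ⟨k, hk⟩ := hl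
  refine ⟨a - k * 2 ^ (d + 1), ha.sub_even ⟨k * 2 ^ d, by ring⟩, ?_⟩
  obtain rfl : l = k / 8 := by linarith
  push_cast
  field_simp
  ring

end HasBinaryPrecision

theorem mem_of_int_eight_mul {x : ℚ} (hx : ∃ n : ℤ, (2 : ℚ) ^ 3 * x = n) (h14 : 1 / 4 ≤ x)
    (h34 : x ≤ 3 / 4) : x ∈ ({1/4, 3/8, 1/2, 5/8, 3/4} : Set ℚ) := by
  obtain ⟨n, hn⟩ := hx
  have hxn : x = n / 8 := by linarith
  have h2 : 2 ≤ n := by exact_mod_cast (show (2 : ℚ) ≤ n by linarith)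
  have h6 : n ≤ 6 := by exact_mod_cast (show (n : ℚ) ≤ 6 by linarith)
  interval_cases n <;> norm_num [hxn]

theorem two_mul_add_two_le_and_le_of_eq_ceil {d N : ℕ} (hN : (N : ℤ) = ⌈((d : ℚ) - 3) / 2⌉) :
    2 * N + 2 ≤ d ∧ d ≤ 2 * N + 3 := by
  obtain ⟨hlt, hle⟩ := Int.ceil_eq_iff.mp hN.symm
  push_cast at hlt hle
  have h1 : ((2 * N + 1 : ℕ) : ℚ) < d := by push_cast; linarith
  have h2 : (d : ℚ) ≤ (2 * N + 3 : ℕ) := by push_cast; linarith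
  exact ⟨by exact_mod_cast h1, by exact_mod_cast h2⟩

theorem exists_int_eight_mul_of_mem {l : ℚ} (hl : l ∈ ({1/8, 2/8, 3/8, 4/8, 5/8} : Set ℚ)) :
    ∃ k : ℤ, 8 * l = k := by
  rcases hl with rfl | rfl | rfl | rfl | rfl
  exacts [⟨1, by norm_num⟩, ⟨2, by norm_num⟩, ⟨3, by norm_num⟩, ⟨4, by norm_num⟩, ⟨5, by norm_num⟩]

theorem hasBinaryPrecision_of_iterate {t l : ℕ → ℚ} {d N : ℕ} (h0 : HasBinaryPrecision (t 0) d)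
    (hN : 2 * N + 2 ≤ d)
    (hrec : ∀ s < N, (∃ k : ℤ, 8 * l s = k) ∧ t (s + 1) = 4 * (t s - l s)) :
    ∀ s ≤ N, HasBinaryPrecision (t s) (d - 2 * s) := by
  intro s hs
  induction s with
  | zero => exact h0
  | succ s ih =>
    obtain ⟨hl, hstep⟩ := hrec s (by omega)
    obtain ⟨e, he⟩ : ∃ e, d - 2 * s = e + 4 := ⟨d - 2 * s - 4, by omega⟩
    have hprec := (he ▸ ih (by omega)).four_mul_sub hl
    rwa [hstep, show d - 2 * (s + 1) = e + 2 by omega]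

theorem stmt_18_general (t l : ℕ → ℚ) (d0 : ℕ) (a : ℤ) (ha : Odd a)
    (ht0 : t 0 = (a : ℚ)/2^d0) (h14 : 1/4 ≤ t 0) (h34 : t 0 ≤ 3/4)
    (N : ℕ) (hN : (N : ℤ) = ⌈((d0 : ℚ) - 3)/2⌉)
    (hrec : ∀ s < N, l s ∈ ({1/8, 2/8, 3/8, 4/8, 5/8} : Set ℚ) ∧
      l s + 1/16 ≤ t s ∧ t s ≤ l s + 3/16 ∧ t (s + 1) = 4*(t s - l s)) :
    (∀ s < N, ¬ ∃ n : ℤ, (2 : ℚ)^3 * t s = n) ∧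
    (∃ n : ℤ, (2 : ℚ)^3 * t N = n) ∧
    t N ∈ ({1/4, 3/8, 1/2, 5/8, 3/4} : Set ℚ) := by
  obtain ⟨hNd, hdN⟩ := two_mul_add_two_le_and_le_of_eq_ceil hN
  have hprec := hasBinaryPrecision_of_iterate ⟨a, ha, ht0⟩ hNd fun s hs ↦
    ⟨exists_int_eight_mul_of_mem (hrec s hs).1, (hrec s hs).2.2.2⟩
  have hint : ∃ n : ℤ, (2 : ℚ) ^ 3 * t N = n :=
    ((hprec N le_rfl).exists_int_two_pow_mul_iff 3).mpr (by omega)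
  have hbounds : 1 / 4 ≤ t N ∧ t N ≤ 3 / 4 := by
    cases N with
    | zero => exact ⟨h14, h34⟩
    | succ M =>
      obtain ⟨-, hlo, hhi, hstep⟩ := hrec M M.lt_succ_self
      rw [hstep]
      constructor <;> linarith
  refine ⟨fun s hs ↦ ?_, hint, mem_of_int_eight_mul hint hbounds.1 hbounds.2⟩
  rw [(hprec s hs.le).exists_int_two_pow_mul_iff]
  omega

theorem stmt_18 (t l : ℕ → ℚ) (d0 : ℕ) (a : ℤ) (ha : Odd a)
    (ht0 : t 0 = (a : ℚ)/2^d0) (h14 : 1/4 ≤ t 0) (h34 : t 0 ≤ 3/4)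
    (hd0 : 4 ≤ d0)
    (N : ℕ) (hN : (N : ℤ) = ⌈((d0 : ℚ) - 3)/2⌉)
    (hrec : ∀ s < N, l s ∈ ({1/8, 2/8, 3/8, 4/8, 5/8} : Set ℚ) ∧
      l s + 1/16 ≤ t s ∧ t s ≤ l s + 3/16 ∧ t (s + 1) = 4*(t s - l s)) :
    (∀ s < N, ¬ ∃ n : ℤ, (2 : ℚ)^3 * t s = n) ∧
    (∃ n : ℤ, (2 : ℚ)^3 * t N = n) ∧
    t N ∈ ({1/4, 3/8, 1/2, 5/8, 3/4} : Set ℚ) :=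
  stmt_18_general t l d0 a ha ht0 h14 h34 N hN hrec
end
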